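/- arXiv:2411.04881 — 10 statements merged into one kernel-verified Lean document; each statement's English description precedes it below -/
import Mathlib

section
/- For any positive integer n ≥ 2, the ceiling of (5n - 2 - √(9n² - 4n + 4))/8 equals the ceiling of n/4. -/
theorem stmt2 (n : ℕ) (hn : 2 ≤ n) :
    ⌈(5 * (n : ℝ) - 2 - Real.sqrt (9 * (n : ℝ) ^ 2 - 4 * n + 4)) / 8⌉ = ⌈(n : ℝ) / 4⌉ := by
  have hn' : (2 : ℝ) ≤ (n : ℝ) := by exact_mod_cast hn
  set D : ℝ := 9 * (n : ℝ) ^ 2 - 4 * n + 4 with hD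
  -- bounds on sqrt
  have hub : Real.sqrt D < 3 * n := by
    rw [Real.sqrt_lt' (by linarith)]
    nlinarith
  have hlb : 3 * (n : ℝ) - 2 < Real.sqrt D := by
    rw [Real.lt_sqrt (by linarith)]
    nlinarith
  set x : ℝ := (5 * (n : ℝ) - 2 - Real.sqrt D) / 8 with hx
  have hxu : x < (n : ℝ) / 4 := by rw [hx]; linarith
  have hxl : ((n : ℝ) - 1) / 4 < x := by rw [hx]; linarith
  set c : ℤ := ⌈(n : ℝ) / 4⌉ with hc
  rw [Int.ceil_eq_iff]
  constructor
  · -- c - 1 ≤ (n-1)/4 < x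
    have h1 : (c : ℝ) - 1 < (n : ℝ) / 4 := by
      have := Int.ceil_lt_add_one ((n : ℝ) / 4)
      linarith
    -- integrality: 4c - 4 < n implies 4c ≤ n + 3
    have h2 : 4 * c - 4 < (n : ℤ) := by
      have : ((4 * c - 4 : ℤ) : ℝ) < (n : ℝ) := by push_cast; linarith
      exact_mod_cast this
    have h3 : (c : ℝ) - 1 ≤ ((n : ℝ) - 1) / 4 := by
      have h4 : 4 * c ≤ (n : ℤ) + 3 := by omega
      have : ((4 * c : ℤ) : ℝ) ≤ ((n : ℝ) + 3) := by exact_mod_cast h4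
      push_cast at this
      linarith
    linarith
  · have := Int.le_ceil ((n : ℝ) / 4)
    linarith
end

section
/- For any positive integer n ≥ 2, the floor of (5n - 2 - √(9n² - 4n + 4))/8 equals ⌊n/4⌋ - 1 if 4 divides n, and equals ⌊n/4⌋ otherwise. -/
theorem stmt3 (n : ℕ) (hn : 2 ≤ n) :
    ⌊(5 * (n : ℝ) - 2 - Real.sqrt (9 * (n : ℝ) ^ 2 - 4 * n + 4)) / 8⌋ =
      if 4 ∣ n then ⌊(n : ℝ) / 4⌋ - 1 else ⌊(n : ℝ) / 4⌋ := by
  obtain ⟨q, r, hr4, hnqr⟩ : ∃ q r, r < 4 ∧ n = 4 * q + r :=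
    ⟨n / 4, n % 4, Nat.mod_lt _ (by norm_num), (Nat.div_add_mod n 4).symm⟩
  have hD : (0:ℝ) ≤ 9 * (n : ℝ) ^ 2 - 4 * n + 4 := by nlinarith [sq_nonneg ((n:ℝ) - 1)]
  have hs2 : Real.sqrt (9 * (n : ℝ) ^ 2 - 4 * n + 4) ^ 2 = 9 * (n : ℝ) ^ 2 - 4 * n + 4 :=
    Real.sq_sqrt hD
  have hs0 : 0 ≤ Real.sqrt (9 * (n : ℝ) ^ 2 - 4 * n + 4) := Real.sqrt_nonneg _
  have hn' : (2:ℝ) ≤ n := by exact_mod_cast hn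
  have hne : (n:ℝ) = 4 * q + r := by exact_mod_cast congrArg (Nat.cast : ℕ → ℝ) hnqr
  have hq0 : (0:ℝ) ≤ q := by positivity
  have hrlt : (r:ℝ) < 4 := by exact_mod_cast hr4
  have hr0 : (0:ℝ) ≤ r := by positivity
  have hfl : ⌊(n : ℝ) / 4⌋ = (q : ℤ) := by
    rw [Int.floor_eq_iff]
    push_cast
    constructor
    · rw [le_div_iff₀ (by norm_num)]; linarith [hne]
    · rw [div_lt_iff₀ (by norm_num)]; linarith [hne, hrlt]
  by_cases hd : 4 ∣ n
  · have hr0 : (r:ℝ) = 0 := by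
      have : r = 0 := by omega
      simp [this]
    rw [if_pos hd, hfl]
    rw [Int.floor_eq_iff]
    constructor
    · have hub : Real.sqrt (9 * (n : ℝ) ^ 2 - 4 * n + 4) ≤ 3 * n + 6 := by
        nlinarith [hs2, hs0, hn']
      push_cast
      rw [le_div_iff₀ (by norm_num)]
      nlinarith [hub]
    · have hlb : 3 * (n:ℝ) - 2 < Real.sqrt (9 * (n : ℝ) ^ 2 - 4 * n + 4) := by
        nlinarith [hs2, hs0, hn']
      push_cast
      rw [div_lt_iff₀ (by norm_num)]
      nlinarith [hlb]
  · have hr1 : (1:ℝ) ≤ r := by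
      have : 1 ≤ r := by omega
      exact_mod_cast this
    rw [if_neg hd, hfl]
    rw [Int.floor_eq_iff]
    constructor
    · have hub : Real.sqrt (9 * (n : ℝ) ^ 2 - 4 * n + 4) ≤ 3 * n + 2 * r - 2 := by
        nlinarith [hs2, hs0, hn', hr1, mul_nonneg (sub_nonneg.mpr hn') (sub_nonneg.mpr hr1)]
      push_cast
      rw [le_div_iff₀ (by norm_num)]
      nlinarith [hub, hne]
    · have hc2 : (3 * (n:ℝ) + 2 * r - 10) ^ 2 < 9 * (n : ℝ) ^ 2 - 4 * n + 4 := by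
        nlinarith [hn', hr1, hrlt, mul_nonneg (sub_nonneg.mpr hn') (sub_nonneg.mpr hr1)]
      have hlb : 3 * (n:ℝ) + 2 * r - 10 < Real.sqrt (9 * (n : ℝ) ^ 2 - 4 * n + 4) := by
        nlinarith [hs2, hs0, hc2]
      push_cast
      rw [div_lt_iff₀ (by norm_num)]
      nlinarith [hlb, hne]
end

section
/- Let a_1, ..., a_n be real numbers with m ≤ a_j ≤ M for all j, and let ā = (1/n)Σ a_j. Then (1/n)Σ_{j=1}^n (a_j - ā)² ≤ (M - ā)(ā - m), with equality if and only if every a_j equals either M or m. -/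
open Finset

theorem stmt6 {n : ℕ} (hn : 0 < n) (a : Fin n → ℝ) (M m : ℝ)
    (hM : ∀ j, a j ≤ M) (hm : ∀ j, m ≤ a j) :
    (∑ j, (a j - (∑ j, a j) / n) ^ 2) / n ≤
        (M - (∑ j, a j) / n) * ((∑ j, a j) / n - m) ∧
      ((∑ j, (a j - (∑ j, a j) / n) ^ 2) / n =
          (M - (∑ j, a j) / n) * ((∑ j, a j) / n - m) ↔
        ∀ j, a j = M ∨ a j = m) := by
  have hns : (n : ℝ) ≠ 0 := Nat.cast_ne_zero.mpr hn.ne'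
  set s : ℝ := ∑ j, a j with hs
  set A : ℝ := s / n with hA
  have hAn : A * n = s := div_mul_cancel₀ s hns
  have key : ∑ j, (M - a j) * (a j - m) =
      (n : ℝ) * ((M - A) * (A - m)) - ∑ j, (a j - A) ^ 2 := by
    have h1 : ∀ j : Fin n, (M - a j) * (a j - m) =
        -((a j - A) ^ 2) + (M + m - 2 * A) * a j + (A ^ 2 - M * m) := by
      intro j; ring
    simp_rw [h1]
    rw [Finset.sum_add_distrib, Finset.sum_add_distrib, Finset.sum_neg_distrib,
      ← Finset.mul_sum, Finset.sum_const, Finset.card_fin, nsmul_eq_mul, ← hs]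
    have : s = A * n := hAn.symm
    rw [this]; ring
  have hterm : ∀ j : Fin n, 0 ≤ (M - a j) * (a j - m) := fun j =>
    mul_nonneg (sub_nonneg.mpr (hM j)) (sub_nonneg.mpr (hm j))
  have hsum : 0 ≤ ∑ j, (M - a j) * (a j - m) :=
    Finset.sum_nonneg fun j _ => hterm j
  constructor
  · rw [div_le_iff₀ (by positivity : (0:ℝ) < n)]
    nlinarith [hsum, key]
  · constructor
    · intro h
      have h0 : ∑ j, (M - a j) * (a j - m) = 0 := by
        rw [key]
        have : ∑ j, (a j - A) ^ 2 = (n : ℝ) * ((M - A) * (A - m)) := by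
          field_simp at h
          linarith [h]
        rw [this]; ring
      have := (Finset.sum_eq_zero_iff_of_nonneg (fun j _ => hterm j)).mp h0
      intro j
      have hj := this j (Finset.mem_univ j)
      rcases mul_eq_zero.mp hj with h' | h'
      · left; linarith
      · right; linarith
    · intro h
      have h0 : ∑ j, (M - a j) * (a j - m) = 0 :=
        Finset.sum_eq_zero fun j _ => by rcases h j with h' | h' <;> simp [h']
      rw [h0] at key
      rw [eq_div_iff hns] at hA
      field_simp
      linarith [key]
end

section
/- Let G be a connected simple graph on n vertices, m edges, with maximum degree Δ and minimum degree δ. Then σ_t(G) ≤ 4(√(2mn) - n√δ)(n²Δ² + 4m²)/(n√δ). -/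
open Finset

noncomputable def sigmaT {V : Type*} [Fintype V] (G : SimpleGraph V) [DecidableRel G.Adj] : ℝ :=
  (∑ u : V, ∑ v : V, ((G.degree u : ℝ) - (G.degree v : ℝ)) ^ 2) / 2

set_option maxHeartbeats 1000000 in
theorem stmt12 {V : Type*} [Fintype V] (G : SimpleGraph V) [DecidableRel G.Adj]
    (hconn : G.Connected) (n m Δ δ : ℕ) (hn : n = Fintype.card V)
    (hm : m = G.edgeFinset.card) (hΔ : Δ = G.maxDegree) (hδ : δ = G.minDegree) :
    sigmaT G ≤ 4 * (Real.sqrt (2 * m * n) - n * Real.sqrt δ) *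
        ((n : ℝ) ^ 2 * Δ ^ 2 + 4 * m ^ 2) / (n * Real.sqrt δ) := by
  have hne : Nonempty V := hconn.nonempty
  have hn1 : 1 ≤ Fintype.card V := Fintype.card_pos
  set D : V → ℝ := fun v => (G.degree v : ℝ) with hD
  -- degree sum
  have hsum : ∑ v : V, D v = 2 * m := by
    have h := G.sum_degrees_eq_twice_card_edges
    have h2 : ∑ v : V, D v = ((∑ v : V, G.degree v : ℕ) : ℝ) := by push_cast; rfl
    rw [h2, h, hm]; push_cast; ring
  have hDlo : ∀ v, (δ : ℝ) ≤ D v := by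
    intro v; exact_mod_cast hδ ▸ Nat.cast_le.mpr (G.minDegree_le_degree v)
  have hDhi : ∀ v, D v ≤ (Δ : ℝ) := by
    intro v; exact_mod_cast hΔ ▸ Nat.cast_le.mpr (G.degree_le_maxDegree v)
  -- sigmaT = n * Q - s^2
  set Q : ℝ := ∑ v : V, D v ^ 2 with hQ
  have hsig : sigmaT G = (n : ℝ) * Q - (2 * (m : ℝ)) ^ 2 := by
    have h1 : ∀ u : V, ∑ v : V, (D u - D v) ^ 2
        = (n : ℝ) * D u ^ 2 - (4 * (m : ℝ)) * D u + Q := by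
      intro u
      have e : ∀ v : V, (D u - D v) ^ 2 = D u ^ 2 - (2 * D u) * D v + D v ^ 2 :=
        fun v => by ring
      rw [Finset.sum_congr rfl fun v _ => e v, Finset.sum_add_distrib,
        Finset.sum_sub_distrib, Finset.sum_const, card_univ, ← Finset.mul_sum, hsum,
        ← hQ, nsmul_eq_mul, ← hn]
      ring
    unfold sigmaT
    rw [show (∑ u : V, ∑ v : V, ((G.degree u : ℝ) - (G.degree v : ℝ)) ^ 2)
        = ∑ u : V, ∑ v : V, (D u - D v) ^ 2 from rfl,
      Finset.sum_congr rfl fun u _ => h1 u, Finset.sum_add_distrib,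
      Finset.sum_sub_distrib, Finset.sum_const, card_univ, ← Finset.mul_sum,
      ← Finset.mul_sum, hsum, ← hQ, nsmul_eq_mul, ← hn]
    ring
  -- termwise bound : Q ≤ (Δ+δ) * 2m - n * Δ * δ
  have hQle : Q ≤ ((Δ : ℝ) + δ) * (2 * m) - (n : ℝ) * Δ * δ := by
    have h0 : (0:ℝ) ≤ ∑ v : V, ((Δ : ℝ) - D v) * (D v - δ) := by
      apply Finset.sum_nonneg; intro v _
      exact mul_nonneg (by linarith [hDhi v]) (by linarith [hDlo v])
    have hexp : ∑ v : V, ((Δ : ℝ) - D v) * (D v - δ)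
        = ((Δ : ℝ) + δ) * (2 * m) - (n : ℝ) * ((Δ:ℝ) * δ) - Q := by
      have e : ∀ v : V, ((Δ : ℝ) - D v) * (D v - δ)
          = ((Δ : ℝ) + δ) * D v - (Δ : ℝ) * δ - D v ^ 2 := fun v => by ring
      rw [Finset.sum_congr rfl fun v _ => e v, Finset.sum_sub_distrib,
        Finset.sum_sub_distrib, Finset.sum_const, card_univ, ← Finset.mul_sum, hsum,
        ← hQ, nsmul_eq_mul, ← hn]
    nlinarith [hexp ▸ h0]
  have hP : sigmaT G ≤ ((n : ℝ) * Δ - 2 * m) * (2 * m - (n : ℝ) * δ) := by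
    rw [hsig]; nlinarith [hQle, hn1]
  -- basic facts
  have hnδ2m : (n : ℝ) * δ ≤ 2 * m := by
    have h := Finset.sum_le_sum fun v (_ : v ∈ univ) => hDlo v
    rw [hsum, Finset.sum_const, card_univ, nsmul_eq_mul, ← hn] at h
    linarith
  have h2mnΔ : 2 * (m : ℝ) ≤ (n : ℝ) * Δ := by
    have h := Finset.sum_le_sum fun v (_ : v ∈ univ) => hDhi v
    rw [hsum, Finset.sum_const, card_univ, nsmul_eq_mul, ← hn] at h
    linarith
  have hδΔ : (δ : ℝ) ≤ (Δ : ℝ) := by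
    obtain ⟨v⟩ := hne
    exact le_trans (hDlo v) (hDhi v)
  by_cases hc1 : Fintype.card V = 1
  · -- single vertex case
    have hδ0 : δ = 0 := by
      obtain ⟨v⟩ := hne
      have h1 := G.degree_lt_card_verts v
      rw [hc1] at h1
      have := G.minDegree_le_degree v
      omega
    have hsub : Subsingleton V := Fintype.card_le_one_iff_subsingleton.mp (le_of_eq hc1)
    have hsig0 : sigmaT G = 0 := by
      unfold sigmaT
      have e : ∀ u v : V, ((G.degree u : ℝ) - (G.degree v : ℝ)) ^ 2 = 0 := by
        intro u v
        rw [Subsingleton.elim u v]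
        ring
      simp [e]
    rw [hsig0, hδ0]
    simp
  · -- main case : card ≥ 2, so δ ≥ 1
    have hn2 : 2 ≤ Fintype.card V := by omega
    have hδ1 : 1 ≤ δ := by
      obtain ⟨v, hv⟩ := G.exists_minimal_degree_vertex
      obtain ⟨w, hw⟩ := Fintype.exists_ne_of_one_lt_card (by omega) v
      obtain ⟨p⟩ := hconn.preconnected v w
      cases p with
      | nil => exact absurd rfl hw.symm
      | cons h q =>
        have : 0 < G.degree v := (G.degree_pos_iff_exists_adj v).mpr ⟨_, h⟩
        omega
    have hnR : (1 : ℝ) ≤ (n : ℝ) := by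
      have : 1 ≤ n := by omega
      exact_mod_cast this
    have hm0 : (0 : ℝ) ≤ (m : ℝ) := Nat.cast_nonneg m
    have hΔ0 : (0 : ℝ) ≤ (Δ : ℝ) := Nat.cast_nonneg Δ
    set S : ℝ := Real.sqrt (2 * m * n) with hS
    set c : ℝ := (n : ℝ) * Real.sqrt δ with hcdef
    have hS0 : 0 ≤ S := Real.sqrt_nonneg _
    have hsδ1 : (1 : ℝ) ≤ Real.sqrt δ := by
      rw [show (1:ℝ) = Real.sqrt 1 from (Real.sqrt_one).symm]
      exact Real.sqrt_le_sqrt (by exact_mod_cast hδ1)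
    have hcpos : 0 < c := by
      rw [hcdef]
      have : (0:ℝ) < Real.sqrt δ := by linarith
      nlinarith
    have hS2 : S ^ 2 = 2 * m * n := Real.sq_sqrt (by positivity)
    have hc2 : c ^ 2 = (n : ℝ) ^ 2 * δ := by
      rw [hcdef, mul_pow, Real.sq_sqrt (by positivity)]
    -- c * S ≤ n^2 * Δ
    have hcS : c * S ≤ (n : ℝ) ^ 2 * Δ := by
      have h1 : c = Real.sqrt ((n : ℝ) ^ 2 * δ) := by
        rw [Real.sqrt_mul (by positivity), Real.sqrt_sq (by positivity), hcdef]
      have h2 : c * S = Real.sqrt ((n : ℝ) ^ 2 * δ * (2 * m * n)) := by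
        rw [h1, hS, ← Real.sqrt_mul (by positivity)]
      rw [h2]
      have hprod : (δ : ℝ) * (2 * m) ≤ (Δ : ℝ) * ((n : ℝ) * Δ) :=
        mul_le_mul hδΔ h2mnΔ (by positivity) hΔ0
      have h3 : (n : ℝ) ^ 2 * δ * (2 * m * n) ≤ ((n : ℝ) ^ 2 * Δ) ^ 2 := by
        nlinarith [mul_le_mul_of_nonneg_left hprod (by positivity : (0:ℝ) ≤ (n:ℝ) ^ 3)]
      calc Real.sqrt ((n : ℝ) ^ 2 * δ * (2 * m * n)) ≤ Real.sqrt (((n : ℝ) ^ 2 * Δ) ^ 2) :=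
            Real.sqrt_le_sqrt h3
        _ = (n : ℝ) ^ 2 * Δ := Real.sqrt_sq (by positivity)
    set A : ℝ := (n : ℝ) ^ 2 * Δ ^ 2 + 4 * m ^ 2 with hA
    set P : ℝ := ((n : ℝ) * Δ - 2 * m) * (2 * m - (n : ℝ) * δ) with hPdef
    have key : P * c ≤ 4 * (S - c) * A := by
      have hSc : 0 < S + c := by linarith
      have hmain : P * c * (S + c) ≤ 4 * (S - c) * A * (S + c) := by
        have hrhs : 4 * (S - c) * A * (S + c) = 4 * (n : ℝ) * (2 * m - (n : ℝ) * δ) * A := by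
          have e : 4 * (S - c) * A * (S + c) = 4 * A * (S ^ 2 - c ^ 2) := by ring
          rw [e, hS2, hc2]; ring
        rw [hrhs]
        have hq : 0 ≤ 2 * (m : ℝ) - (n : ℝ) * δ := by linarith
        have hq2 : 0 ≤ (n : ℝ) * Δ - 2 * m := by linarith
        have hcf : c * (S + c) * ((n : ℝ) * Δ - 2 * m) ≤ 4 * (n : ℝ) * A := by
          have hA4 : 2 * (n : ℝ) ^ 2 * Δ * ((n : ℝ) * Δ) ≤ 4 * (n : ℝ) * A := by
            rw [hA]
            nlinarith [mul_nonneg (mul_nonneg (by positivity : (0:ℝ) ≤ (n:ℝ)^3) hΔ0) hΔ0,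
              mul_nonneg (by linarith : (0:ℝ) ≤ (n:ℝ)) (mul_nonneg hm0 hm0)]
          have hccsq : c ^ 2 ≤ (n : ℝ) ^ 2 * Δ := by
            rw [hc2]
            exact mul_le_mul_of_nonneg_left hδΔ (by positivity)
          have hcc : c * (S + c) ≤ 2 * (n : ℝ) ^ 2 * Δ := by
            calc c * (S + c) = c * S + c ^ 2 := by ring
              _ ≤ (n : ℝ) ^ 2 * Δ + (n : ℝ) ^ 2 * Δ := add_le_add hcS hccsq
              _ = 2 * (n : ℝ) ^ 2 * Δ := by ring
          calc c * (S + c) * ((n : ℝ) * Δ - 2 * m)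
              ≤ 2 * (n : ℝ) ^ 2 * Δ * ((n : ℝ) * Δ - 2 * m) :=
                mul_le_mul_of_nonneg_right hcc hq2
            _ ≤ 2 * (n : ℝ) ^ 2 * Δ * ((n : ℝ) * Δ) := by
                apply mul_le_mul_of_nonneg_left (by linarith) (by positivity)
            _ ≤ 4 * (n : ℝ) * A := hA4
        calc P * c * (S + c)
            = c * (S + c) * ((n : ℝ) * Δ - 2 * m) * (2 * m - (n : ℝ) * δ) := by
              rw [hPdef]; ring
          _ ≤ 4 * (n : ℝ) * A * (2 * m - (n : ℝ) * δ) :=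
              mul_le_mul_of_nonneg_right hcf hq
          _ = 4 * (n : ℝ) * (2 * m - (n : ℝ) * δ) * A := by ring
      exact le_of_mul_le_mul_right hmain hSc
    rw [le_div_iff₀ hcpos]
    exact le_trans (mul_le_mul_of_nonneg_right hP hcpos.le) key
end

section
/- Let G be a connected simple graph on n vertices, m edges, with minimum degree δ and maximum degree Δ. Then the graph energy satisfies E(G) ≤ √(2mn) - n√δ·σ_t(G)/(4(n²Δ² + 4m²)). -/
open Finset

/-- The energy of a graph: the sum of the absolute values of the eigenvalues of its
adjacency matrix. -/
noncomputable def graphEnergy {V : Type*} [Fintype V] [DecidableEq V] (G : SimpleGraph V)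
    [DecidableRel G.Adj] (hA : (G.adjMatrix ℝ).IsHermitian) : ℝ :=
  ∑ i, |hA.eigenvalues i|

/-! Diagonalising the adjacency matrix as `U D Uᵀ`, the squares `U u i ^ 2` form a doubly
stochastic matrix and `d(u) = ∑ i, U u i ^ 2 * λ i ^ 2`, so Cauchy–Schwarz gives
`E(G) ≤ ∑ u, √d(u)`. With `q = 2m/n` the average degree there is the exact identity
`∑ u, √d(u) = n √q - ∑ u, (√d(u) - √q)² / (2√q)`, and
`(d(u) - q)² = (√d(u) - √q)² (√d(u) + √q)² ≤ (√d(u) - √q)² (√Δ + √q)²` bounds the defect below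
by the degree variance `∑ u, (d(u) - q)² = σ_t / n`. The constants are absorbed using
`δ ≤ q ≤ Δ`. -/

open Matrix

lemma sum_abs_le_sum_sqrt_of_mem_doublyStochastic {ι : Type*} [Fintype ι] [DecidableEq ι]
    {M : Matrix ι ι ℝ} (hM : M ∈ doublyStochastic ℝ ι) (x : ι → ℝ) :
    ∑ i, |x i| ≤ ∑ u, √(∑ i, M u i * x i ^ 2) := by
  calc ∑ i, |x i|
      = ∑ u, ∑ i, √(M u i) * √(M u i * x i ^ 2) := by
        rw [sum_comm]
        refine sum_congr rfl fun i _ ↦ ?_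
        rw [← mul_one |x i|, ← sum_col_of_mem_doublyStochastic hM i, mul_sum]
        refine sum_congr rfl fun u _ ↦ ?_
        rw [Real.sqrt_mul (nonneg_of_mem_doublyStochastic hM), Real.sqrt_sq_eq_abs,
          ← mul_assoc, Real.mul_self_sqrt (nonneg_of_mem_doublyStochastic hM), mul_comm]
    _ ≤ ∑ u, √(∑ i, M u i) * √(∑ i, M u i * x i ^ 2) :=
        sum_le_sum fun u _ ↦ Real.sum_sqrt_mul_sqrt_le _
          (fun _ ↦ nonneg_of_mem_doublyStochastic hM)
          fun _ ↦ mul_nonneg (nonneg_of_mem_doublyStochastic hM) (sq_nonneg _)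
    _ = ∑ u, √(∑ i, M u i * x i ^ 2) := by
        simp only [sum_row_of_mem_doublyStochastic hM, Real.sqrt_one, one_mul]

lemma Matrix.of_sq_mem_doublyStochastic {ι : Type*} [Fintype ι] [DecidableEq ι]
    (U : unitaryGroup ι ℝ) : of (fun u i ↦ (U : Matrix ι ι ℝ) u i ^ 2) ∈ doublyStochastic ℝ ι := by
  refine mem_doublyStochastic_iff_sum.2 ⟨fun _ _ ↦ sq_nonneg _, fun u ↦ ?_, fun i ↦ ?_⟩
  · simpa [mul_apply, sq] using congr_fun₂ (Unitary.coe_mul_star_self U) u u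
  · simpa [mul_apply, sq] using congr_fun₂ (Unitary.coe_star_mul_self U) i i

namespace Matrix.IsHermitian

variable {ι : Type*} [Fintype ι] [DecidableEq ι] {A : Matrix ι ι ℝ} (hA : A.IsHermitian)

lemma mul_self_apply_self (u : ι) :
    (A * A) u u = ∑ i, (hA.eigenvectorUnitary : Matrix ι ι ℝ) u i ^ 2 * hA.eigenvalues i ^ 2 := by
  have hsq : A * A = Unitary.conjStarAlgAut ℝ _ hA.eigenvectorUnitary
      (diagonal fun i ↦ hA.eigenvalues i ^ 2) := by
    conv_lhs => rw [hA.spectral_theorem, ← map_mul, diagonal_mul_diagonal]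
    simp [sq]
  rw [hsq, Unitary.conjStarAlgAut_apply, mul_apply]
  refine sum_congr rfl fun i _ ↦ ?_
  simp only [mul_diagonal, star_apply, star_trivial]
  ring

lemma sum_abs_eigenvalues_le_sum_sqrt_mul_self_apply_self :
    ∑ i, |hA.eigenvalues i| ≤ ∑ u, √((A * A) u u) := by
  simpa only [hA.mul_self_apply_self, of_apply] using
    sum_abs_le_sum_sqrt_of_mem_doublyStochastic (of_sq_mem_doublyStochastic hA.eigenvectorUnitary)
      hA.eigenvalues

end Matrix.IsHermitian

lemma sqrt_add_sq_sub_sqrt_div {x q : ℝ} (hx : 0 ≤ x) (hq : 0 < q) :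
    √x + (√x - √q) ^ 2 / (2 * √q) = (x + q) / (2 * √q) := by
  field_simp
  linear_combination Real.sq_sqrt hx + Real.sq_sqrt hq.le

lemma sq_sub_le_sq_sqrt_sub_mul {x q Δ : ℝ} (hx : 0 ≤ x) (hxΔ : x ≤ Δ) (hq : 0 ≤ q) :
    (x - q) ^ 2 ≤ (√x - √q) ^ 2 * (√Δ + √q) ^ 2 := by
  have hfactor : x - q = (√x - √q) * (√x + √q) := by
    linear_combination -Real.sq_sqrt hx + Real.sq_sqrt hq
  rw [hfactor, mul_pow]
  gcongr

lemma sqrt_mul_two_sqrt_mul_sq_le {δ q Δ : ℝ} (hδ : 0 ≤ δ) (hδq : δ ≤ q) (hqΔ : q ≤ Δ) :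
    √δ * (2 * √q * (√Δ + √q) ^ 2) ≤ 4 * (Δ ^ 2 + q ^ 2) := by
  have hq : 0 ≤ q := hδ.trans hδq
  have hδq' : √δ * √q ≤ q := by
    calc √δ * √q ≤ √q * √q := by gcongr
      _ = q := Real.mul_self_sqrt hq
  have hsq_add : (√Δ + √q) ^ 2 ≤ 2 * (Δ + q) := by
    nlinarith [sq_nonneg (√Δ - √q), Real.sq_sqrt (hq.trans hqΔ), Real.sq_sqrt hq]
  calc √δ * (2 * √q * (√Δ + √q) ^ 2) = 2 * (√δ * √q) * (√Δ + √q) ^ 2 := by ring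
    _ ≤ 2 * q * (2 * (Δ + q)) := by gcongr
    _ ≤ 4 * (Δ ^ 2 + q ^ 2) := by nlinarith

section
variable {ι : Type*} [Fintype ι]

lemma sum_sum_sub_sq_eq (x : ι → ℝ) {q : ℝ} (hq : ∑ i, x i = Fintype.card ι * q) :
    ∑ i, ∑ j, (x i - x j) ^ 2 = 2 * Fintype.card ι * ∑ i, (x i - q) ^ 2 := by
  have hcentred : ∑ i, (x i - q) = 0 := by simp [sum_sub_distrib, hq]
  calc ∑ i, ∑ j, (x i - x j) ^ 2
      = ∑ i, ∑ j, ((x i - q) ^ 2 - 2 * (x i - q) * (x j - q) + (x j - q) ^ 2) := by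
        congr! 2; ring
    _ = 2 * Fintype.card ι * ∑ i, (x i - q) ^ 2 := by
        simp only [sum_add_distrib, sum_sub_distrib, ← mul_sum, hcentred, mul_zero,
          sum_const_zero, sum_const, card_univ, nsmul_eq_mul]
        ring

lemma sum_sqrt_eq_sub {x : ι → ℝ} (hx : ∀ i, 0 ≤ x i) {q : ℝ} (hq : 0 < q)
    (hsum : ∑ i, x i = Fintype.card ι * q) :
    ∑ i, √(x i) = Fintype.card ι * √q - (∑ i, (√(x i) - √q) ^ 2) / (2 * √q) := by
  rw [eq_sub_iff_add_eq, sum_div, ← sum_add_distrib]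
  simp only [sqrt_add_sq_sub_sqrt_div (hx _) hq]
  rw [← sum_div, sum_add_distrib, hsum, sum_const, card_univ, nsmul_eq_mul]
  field_simp
  rw [Real.sq_sqrt hq.le]
  ring

theorem sum_sqrt_le_sqrt_sum_mul_card_sub {x : ι → ℝ} {δ Δ : ℝ} (hδ : 0 ≤ δ)
    (hx : ∀ i, x i ∈ Set.Icc δ Δ) :
    ∑ i, √(x i) ≤ √((∑ i, x i) * Fintype.card ι) -
      Fintype.card ι * √δ * ((∑ i, ∑ j, (x i - x j) ^ 2) / 2) /
        (4 * (Fintype.card ι ^ 2 * Δ ^ 2 + (∑ i, x i) ^ 2)) := by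
  have hx0 : ∀ i, 0 ≤ x i := fun i ↦ hδ.trans (hx i).1
  rcases (sum_nonneg fun i _ ↦ hx0 i).eq_or_lt with hS | hS
  · have hzero : ∀ i, x i = 0 := fun i ↦
      (sum_eq_zero_iff_of_nonneg fun i _ ↦ hx0 i).1 hS.symm i (mem_univ i)
    simp [hzero]
  set n : ℝ := (Fintype.card ι : ℝ)
  set S := ∑ i, x i
  have hn : 0 < n := by
    obtain ⟨i, -, -⟩ := exists_ne_zero_of_sum_ne_zero hS.ne'
    exact Nat.cast_pos.2 (Fintype.card_pos_iff.2 ⟨i⟩)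
  set q := S / n
  have hSq : S = n * q := (mul_div_cancel₀ S hn.ne').symm
  have hq : 0 < q := by positivity
  have hδq : δ ≤ q := by
    rw [le_div_iff₀ hn, mul_comm, ← nsmul_eq_mul, ← card_univ]
    exact card_nsmul_le_sum _ _ _ fun i _ ↦ (hx i).1
  have hqΔ : q ≤ Δ := by
    rw [div_le_iff₀ hn, mul_comm, ← nsmul_eq_mul, ← card_univ]
    exact sum_le_card_nsmul _ _ _ fun i _ ↦ (hx i).2
  have hsqrt : √(S * n) = n * √q := by
    rw [hSq, show n * q * n = n ^ 2 * q by ring, Real.sqrt_mul (sq_nonneg n), Real.sqrt_sq hn.le]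
  rw [sum_sum_sub_sq_eq x hSq, sum_sqrt_eq_sub hx0 hq hSq, hsqrt]
  set V := ∑ i, (x i - q) ^ 2
  set W := ∑ i, (√(x i) - √q) ^ 2
  have hVW : V ≤ W * (√Δ + √q) ^ 2 := by
    rw [sum_mul]
    exact sum_le_sum fun i _ ↦ sq_sub_le_sq_sqrt_sub_mul (hx0 i) (hx i).2 hq.le
  have hcorrection : n * √δ * (2 * n * V / 2) / (4 * (n ^ 2 * Δ ^ 2 + S ^ 2)) =
      √δ * V / (4 * (Δ ^ 2 + q ^ 2)) := by
    rw [hSq]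
    field_simp
  rw [hcorrection, sub_le_sub_iff_left, div_le_div_iff₀ (by positivity) (by positivity)]
  calc √δ * V * (2 * √q) ≤ √δ * (W * (√Δ + √q) ^ 2) * (2 * √q) := by gcongr
    _ = W * (√δ * (2 * √q * (√Δ + √q) ^ 2)) := by ring
    _ ≤ W * (4 * (Δ ^ 2 + q ^ 2)) :=
      mul_le_mul_of_nonneg_left (sqrt_mul_two_sqrt_mul_sq_le hδ hδq hqΔ) (by positivity)

end

lemma graphEnergy_le_sum_sqrt_degree {V : Type*} [Fintype V] [DecidableEq V] (G : SimpleGraph V)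
    [DecidableRel G.Adj] (hA : (G.adjMatrix ℝ).IsHermitian) :
    graphEnergy G hA ≤ ∑ u, √(G.degree u : ℝ) := by
  simpa only [graphEnergy, SimpleGraph.adjMatrix_mul_self_apply_self] using
    hA.sum_abs_eigenvalues_le_sum_sqrt_mul_self_apply_self

theorem stmt13_general {V : Type*} [Fintype V] [DecidableEq V] (G : SimpleGraph V)
    [DecidableRel G.Adj] (hA : (G.adjMatrix ℝ).IsHermitian)
    (n m Δ δ : ℕ) (hn : n = Fintype.card V)
    (hm : m = G.edgeFinset.card) (hΔ : Δ = G.maxDegree) (hδ : δ = G.minDegree) :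
    graphEnergy G hA ≤ Real.sqrt (2 * m * n) -
      (n : ℝ) * Real.sqrt δ * sigmaT G / (4 * ((n : ℝ) ^ 2 * Δ ^ 2 + 4 * m ^ 2)) := by
  have hdeg : ∀ u, (G.degree u : ℝ) ∈ Set.Icc (δ : ℝ) Δ := fun u ↦
    ⟨by exact_mod_cast hδ ▸ G.minDegree_le_degree u, by exact_mod_cast hΔ ▸ G.degree_le_maxDegree u⟩
  have hsum : ∑ u, (G.degree u : ℝ) = 2 * m := by
    rw [hm]; exact_mod_cast G.sum_degrees_eq_twice_card_edges
  have hbound := sum_sqrt_le_sqrt_sum_mul_card_sub (Nat.cast_nonneg δ) hdeg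
  rw [hsum, ← hn] at hbound
  calc graphEnergy G hA ≤ ∑ u, √(G.degree u : ℝ) := graphEnergy_le_sum_sqrt_degree G hA
    _ ≤ _ := hbound
    _ = _ := by unfold sigmaT; ring

theorem stmt13 {V : Type*} [Fintype V] [DecidableEq V] (G : SimpleGraph V)
    [DecidableRel G.Adj] (hA : (G.adjMatrix ℝ).IsHermitian)
    (hconn : G.Connected) (n m Δ δ : ℕ) (hn : n = Fintype.card V)
    (hm : m = G.edgeFinset.card) (hΔ : Δ = G.maxDegree) (hδ : δ = G.minDegree) :
    graphEnergy G hA ≤ Real.sqrt (2 * m * n) -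
      (n : ℝ) * Real.sqrt δ * sigmaT G / (4 * ((n : ℝ) ^ 2 * Δ ^ 2 + 4 * m ^ 2)) :=
  stmt13_general G hA n m Δ δ hn hm hΔ hδ
end

section
/- Let G be a connected simple graph on n vertices with m edges in which exactly k < n vertices have the maximum degree Δ. Then σ_t(G) ≥ (k/(n-k))·(nΔ - 2m)², with equality if and only if the remaining n - k vertices all have degree (2m - kΔ)/(n - k). -/
open Finset

lemma sum_sub_sq_ident {V : Type*} (s : Finset V) (f : V → ℝ) :
    ∑ u ∈ s, ∑ v ∈ s, (f u - f v) ^ 2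
      = 2 * ((s.card : ℝ) * ∑ v ∈ s, f v ^ 2 - (∑ v ∈ s, f v) ^ 2) := by
  have h : ∀ u ∈ s, ∑ v ∈ s, (f u - f v) ^ 2
      = (s.card : ℝ) * f u ^ 2 - 2 * f u * ∑ v ∈ s, f v + ∑ v ∈ s, f v ^ 2 := by
    intro u _
    have : ∀ v ∈ s, (f u - f v) ^ 2 = f u ^ 2 - 2 * f u * f v + f v ^ 2 := by
      intros; ring
    rw [Finset.sum_congr rfl this, Finset.sum_add_distrib, Finset.sum_sub_distrib,
      Finset.sum_const, ← Finset.mul_sum, nsmul_eq_mul]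
  rw [Finset.sum_congr rfl h, Finset.sum_add_distrib, Finset.sum_sub_distrib,
    Finset.sum_const, ← Finset.mul_sum, nsmul_eq_mul]
  have : ∑ u ∈ s, 2 * f u * ∑ v ∈ s, f v = 2 * (∑ v ∈ s, f v) * ∑ v ∈ s, f v := by
    rw [← Finset.sum_mul, ← Finset.mul_sum]
  rw [this]; ring

theorem stmt14 {V : Type*} [Fintype V] [DecidableEq V] (G : SimpleGraph V)
    [DecidableRel G.Adj] (hconn : G.Connected) (n m Δ k : ℕ)
    (hn : n = Fintype.card V) (hm : m = G.edgeFinset.card) (hΔ : Δ = G.maxDegree)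
    (hk : k = (univ.filter fun v => G.degree v = Δ).card) (hkn : k < n) :
    sigmaT G ≥ (k : ℝ) / ((n : ℝ) - k) * ((n : ℝ) * Δ - 2 * m) ^ 2 ∧
      (sigmaT G = (k : ℝ) / ((n : ℝ) - k) * ((n : ℝ) * Δ - 2 * m) ^ 2 ↔
        ∀ v, G.degree v ≠ Δ →
          (G.degree v : ℝ) = (2 * (m : ℝ) - k * Δ) / ((n : ℝ) - k)) := by
  classical
  set f : V → ℝ := fun v => (G.degree v : ℝ) with hf
  set A := univ.filter (fun v => G.degree v = Δ) with hA
  set B := univ.filter (fun v => ¬ G.degree v = Δ) with hB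
  have hcardA : (A.card : ℝ) = k := by rw [hk]
  have hcards : A.card + B.card = n := by
    rw [hn, hA, hB, Finset.card_filter_add_card_filter_not, Finset.card_univ]
  have hcardB : (B.card : ℝ) = (n : ℝ) - k := by
    have : (A.card : ℝ) + B.card = n := by exact_mod_cast congrArg (Nat.cast : ℕ → ℝ) hcards
    rw [hcardA] at this; linarith
  set b : ℝ := (n : ℝ) - k with hbdef
  have hb : 0 < b := by
    have : (k : ℝ) < n := by exact_mod_cast hkn
    simp [hbdef]; linarith
  have hnR : (n : ℝ) = k + b := by ring
  have hnpos : (0:ℝ) < n := by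
    have : (0:ℝ) ≤ k := Nat.cast_nonneg k
    linarith
  have hdegA : ∀ u ∈ A, f u = (Δ : ℝ) := by
    intro u hu
    rw [hA, Finset.mem_filter] at hu
    simp [hf, hu.2]
  -- sums
  have hsumtot : ∑ v : V, f v = 2 * m := by
    rw [hf]
    push_cast [← Nat.cast_sum]
    rw [G.sum_degrees_eq_twice_card_edges, hm]
    push_cast; ring
  have hsplit : ∀ g : V → ℝ, ∑ v : V, g v = ∑ v ∈ A, g v + ∑ v ∈ B, g v := by
    intro g
    rw [hA, hB, Finset.sum_filter_add_sum_filter_not]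
  have hSA : ∑ v ∈ A, f v = k * Δ := by
    rw [Finset.sum_congr rfl hdegA, Finset.sum_const, nsmul_eq_mul, hcardA]
  set S := ∑ v ∈ B, f v with hSdef
  set Q := ∑ v ∈ B, f v ^ 2 with hQdef
  have hS : S = 2 * m - k * Δ := by
    have := hsplit f
    rw [hsumtot, hSA] at this
    linarith [this]
  set T := ∑ v ∈ B, ((Δ : ℝ) - f v) ^ 2 with hTdef
  have hT : T = b * Δ ^ 2 - 2 * Δ * S + Q := by
    have : ∀ v ∈ B, ((Δ : ℝ) - f v) ^ 2 = (Δ:ℝ)^2 - 2 * Δ * f v + f v ^ 2 := by intros; ring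
    rw [hTdef, Finset.sum_congr rfl this, Finset.sum_add_distrib, Finset.sum_sub_distrib,
      Finset.sum_const, ← Finset.mul_sum, nsmul_eq_mul, hcardB]
  set R := ∑ u ∈ B, ∑ v ∈ B, (f u - f v) ^ 2 with hRdef
  have hRnn : 0 ≤ R := by
    apply Finset.sum_nonneg; intro u _; apply Finset.sum_nonneg; intro v _; positivity
  have hR : R = 2 * (b * Q - S ^ 2) := by
    rw [hRdef, sum_sub_sq_ident, hcardB]
  -- decomposition of sigmaT
  have hD : ∑ u : V, ∑ v : V, (f u - f v) ^ 2 = 2 * (k * T) + R := by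
    rw [hsplit (fun u => ∑ v : V, (f u - f v) ^ 2)]
    have inner : ∀ u : V, ∑ v : V, (f u - f v) ^ 2
        = ∑ v ∈ A, (f u - f v) ^ 2 + ∑ v ∈ B, (f u - f v) ^ 2 := fun u =>
      hsplit (fun v => (f u - f v) ^ 2)
    simp_rw [inner]
    rw [Finset.sum_add_distrib, Finset.sum_add_distrib]
    have hAA : ∑ u ∈ A, ∑ v ∈ A, (f u - f v) ^ 2 = 0 := by
      apply Finset.sum_eq_zero; intro u hu
      apply Finset.sum_eq_zero; intro v hv
      rw [hdegA u hu, hdegA v hv]; ring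
    have hAB : ∑ u ∈ A, ∑ v ∈ B, (f u - f v) ^ 2 = k * T := by
      have : ∀ u ∈ A, ∑ v ∈ B, (f u - f v) ^ 2 = T := by
        intro u hu
        apply Finset.sum_congr rfl; intro v _; rw [hdegA u hu]
      rw [Finset.sum_congr rfl this, Finset.sum_const, nsmul_eq_mul, hcardA]
    have hBA : ∑ u ∈ B, ∑ v ∈ A, (f u - f v) ^ 2 = k * T := by
      have : ∀ u ∈ B, ∑ v ∈ A, (f u - f v) ^ 2 = k * ((Δ:ℝ) - f u) ^ 2 := by
        intro u _
        have h2 : ∀ v ∈ A, (f u - f v) ^ 2 = ((Δ:ℝ) - f u) ^ 2 := by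
          intro v hv; rw [hdegA v hv]; ring
        rw [Finset.sum_congr rfl h2, Finset.sum_const, nsmul_eq_mul, hcardA]
      rw [Finset.sum_congr rfl this, ← Finset.mul_sum]
    rw [hAA, hAB, hBA]; ring
  have hsig : sigmaT G = k * T + (b * Q - S ^ 2) := by
    show (∑ u : V, ∑ v : V, (f u - f v) ^ 2) / 2 = _
    rw [hD, hR]; ring
  have hmain : sigmaT G = (k:ℝ) / b * ((n:ℝ) * Δ - 2 * m) ^ 2 + (n:ℝ) / b * (R / 2) := by
    rw [hsig, hT, hR, hS, hnR]
    field_simp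
    ring
  have hfac : 0 < (n:ℝ) / b := by positivity
  constructor
  · rw [hmain]
    have : 0 ≤ (n:ℝ) / b * (R / 2) := mul_nonneg (le_of_lt hfac) (by linarith)
    linarith
  · rw [hmain]
    constructor
    · intro heq
      have hR0 : R = 0 := by
        have : (n:ℝ) / b * (R / 2) = 0 := by linarith
        have := (mul_eq_zero.mp this).resolve_left (ne_of_gt hfac)
        linarith
      intro v hv
      have hvB : v ∈ B := by rw [hB, Finset.mem_filter]; exact ⟨Finset.mem_univ v, hv⟩
      have hall : ∀ u ∈ B, ∀ w ∈ B, (f u - f w) ^ 2 = 0 := by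
        intro u hu w hw
        have h1 := (Finset.sum_eq_zero_iff_of_nonneg
          (fun u _ => Finset.sum_nonneg fun w _ => by positivity)).mp hR0 u hu
        exact (Finset.sum_eq_zero_iff_of_nonneg (fun w _ => by positivity)).mp h1 w hw
      have hconstS : S = b * f v := by
        have : ∀ u ∈ B, f u = f v := by
          intro u hu
          have := hall u hu v hvB
          have := pow_eq_zero_iff (n := 2) (by norm_num) |>.mp this
          linarith [sub_eq_zero.mp this]
        rw [hSdef, Finset.sum_congr rfl this, Finset.sum_const, nsmul_eq_mul, hcardB]
      have : f v = (2 * (m:ℝ) - k * Δ) / b := by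
        rw [hS] at hconstS
        field_simp
        linarith
      exact this
    · intro hcond
      have hR0 : R = 0 := by
        apply Finset.sum_eq_zero; intro u hu
        apply Finset.sum_eq_zero; intro v hv
        rw [hB, Finset.mem_filter] at hu hv
        rw [show f u = (2 * (m:ℝ) - k * Δ) / b from hcond u hu.2,
          show f v = (2 * (m:ℝ) - k * Δ) / b from hcond v hv.2]
        ring
      rw [hR0]; ring
end

section
/- Let G be a connected simple graph on n vertices with m edges and maximum degree Δ, and suppose G is not regular. Then σ_t(G) ≥ (nΔ - 2m)²/(n - 1), with equality if and only if G has exactly one vertex of degree Δ and all other vertices have degree (2m - Δ)/(n - 1). -/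
open Finset

lemma sum_sq_sub' {V : Type*} (s : Finset V) (f : V → ℝ) :
    ∑ u ∈ s, ∑ v ∈ s, (f u - f v) ^ 2
      = 2 * s.card * (∑ v ∈ s, f v ^ 2) - 2 * (∑ v ∈ s, f v) ^ 2 := by
  simp only [sub_sq, Finset.sum_add_distrib, Finset.sum_sub_distrib, Finset.sum_const,
    nsmul_eq_mul, ← Finset.mul_sum, ← Finset.sum_mul]
  ring

theorem stmt15 {V : Type*} [Fintype V] [DecidableEq V] (G : SimpleGraph V)
    [DecidableRel G.Adj] (hconn : G.Connected)
    (hirreg : ¬ ∃ d : ℕ, G.IsRegularOfDegree d) (n m Δ : ℕ)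
    (hn : n = Fintype.card V) (hm : m = G.edgeFinset.card) (hΔ : Δ = G.maxDegree) :
    sigmaT G ≥ ((n : ℝ) * Δ - 2 * m) ^ 2 / ((n : ℝ) - 1) ∧
      (sigmaT G = ((n : ℝ) * Δ - 2 * m) ^ 2 / ((n : ℝ) - 1) ↔
        (univ.filter fun v => G.degree v = Δ).card = 1 ∧
          ∀ v, G.degree v ≠ Δ →
            (G.degree v : ℝ) = (2 * (m : ℝ) - Δ) / ((n : ℝ) - 1)) := by
  haveI : Nonempty V := hconn.nonempty
  obtain ⟨w, hw⟩ := G.exists_maximal_degree_vertex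
  have hdw : G.degree w = Δ := by rw [hΔ, hw]
  -- a vertex of non-maximal degree
  have hu0 : ∃ u, G.degree u ≠ Δ := by
    by_contra h
    push_neg at h
    exact hirreg ⟨Δ, fun v => h v⟩
  obtain ⟨u₀, hu₀⟩ := hu0
  have hu₀w : u₀ ≠ w := fun h => hu₀ (h ▸ hdw)
  -- n ≥ 2
  have hn2 : 2 ≤ n := by
    rw [hn]
    have : Nontrivial V := ⟨u₀, w, hu₀w⟩
    exact Fintype.one_lt_card
  have hn1pos : (0:ℝ) < (n:ℝ) - 1 := by
    have : (2:ℝ) ≤ (n:ℝ) := by exact_mod_cast hn2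
    linarith
  have hnpos : (0:ℝ) < (n:ℝ) := by linarith
  set f : V → ℝ := fun v => (Δ : ℝ) - (G.degree v : ℝ) with hf
  have hfw : f w = 0 := by simp [hf, hdw]
  set s : Finset V := univ.erase w with hs
  have hws : w ∈ (univ : Finset V) := mem_univ w
  have hcards : (s.card : ℝ) = (n:ℝ) - 1 := by
    rw [hs, card_erase_of_mem hws, card_univ, ← hn]
    have : 1 ≤ n := by omega
    push_cast [Nat.cast_sub this]
    ring
  set S1 : ℝ := ∑ v : V, f v with hS1def
  set S2 : ℝ := ∑ v : V, f v ^ 2 with hS2def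
  -- S1 = nΔ - 2m
  have hsumdeg : ∑ v : V, (G.degree v : ℝ) = 2 * (m : ℝ) := by
    rw [hm]
    push_cast [← Nat.cast_sum]
    exact_mod_cast congrArg (Nat.cast : ℕ → ℝ) (G.sum_degrees_eq_twice_card_edges)
  have hS1 : S1 = (n:ℝ) * Δ - 2 * m := by
    rw [hS1def]
    simp only [hf, Finset.sum_sub_distrib, Finset.sum_const, nsmul_eq_mul, card_univ, ← hn,
      hsumdeg]
  -- erase sums
  have hS1e : ∑ v ∈ s, f v = S1 := by
    rw [hS1def, ← Finset.sum_erase_add _ _ hws, hfw, add_zero]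
  have hS2e : ∑ v ∈ s, f v ^ 2 = S2 := by
    rw [hS2def, hs]
    exact Finset.sum_erase _ (by rw [hfw]; ring)
  set D : ℝ := ∑ u ∈ s, ∑ v ∈ s, (f u - f v) ^ 2 with hDdef
  have hD : D = 2 * ((n:ℝ) - 1) * S2 - 2 * S1 ^ 2 := by
    rw [hDdef, sum_sq_sub', hcards, hS1e, hS2e]
  have hDnn : 0 ≤ D := by
    apply Finset.sum_nonneg; intro u _; apply Finset.sum_nonneg; intro v _; positivity
  -- sigma identity
  have hsig : sigmaT G = (n:ℝ) * S2 - S1 ^ 2 := by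
    unfold sigmaT
    have : ∀ u v : V, ((G.degree u : ℝ) - (G.degree v : ℝ)) ^ 2 = (f u - f v) ^ 2 := by
      intro u v; rw [hf]; ring
    simp only [this]
    rw [sum_sq_sub' univ f, card_univ, ← hn, ← hS1def, ← hS2def]
    ring
  have key : sigmaT G = S1 ^ 2 / ((n:ℝ) - 1) + (n:ℝ) * D / (2 * ((n:ℝ) - 1)) := by
    rw [hsig, hD]
    field_simp
    ring
  have hDterm_nn : 0 ≤ (n:ℝ) * D / (2 * ((n:ℝ) - 1)) := by
    apply div_nonneg (mul_nonneg hnpos.le hDnn); linarith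
  constructor
  · rw [key, hS1]; linarith
  · rw [key, hS1]
    have heqD : ((n:ℝ) * Δ - 2 * m) ^ 2 / ((n:ℝ) - 1) + (n:ℝ) * D / (2 * ((n:ℝ) - 1))
        = ((n : ℝ) * Δ - 2 * m) ^ 2 / ((n : ℝ) - 1) ↔ D = 0 := by
      constructor
      · intro h
        have h0 : (n:ℝ) * D / (2 * ((n:ℝ) - 1)) = 0 := by linarith
        have hb : 2 * ((n:ℝ) - 1) ≠ 0 := by linarith
        have h1 : (n:ℝ) * D = 0 := (div_eq_zero_iff.mp h0).resolve_right hb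
        rcases mul_eq_zero.mp h1 with h2 | h2
        · exact absurd h2 hnpos.ne'
        · exact h2
      · intro h; rw [h]; ring
    rw [heqD]
    -- D = 0 ↔ all degrees equal off w
    have hD0 : D = 0 ↔ ∀ u ∈ s, ∀ v ∈ s, G.degree u = G.degree v := by
      rw [hDdef]
      rw [Finset.sum_eq_zero_iff_of_nonneg (fun u _ => Finset.sum_nonneg fun v _ => by positivity)]
      constructor
      · intro h u hu v hv
        have := (Finset.sum_eq_zero_iff_of_nonneg (fun v _ => by positivity)).mp (h u hu) v hv
        have h2 : f u = f v := by nlinarith [sq_nonneg (f u - f v)]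
        have : (G.degree u : ℝ) = G.degree v := by
          simp only [hf] at h2; linarith
        exact_mod_cast this
      · intro h u hu
        apply Finset.sum_eq_zero
        intro v hv
        have : f u = f v := by simp only [hf, h u hu v hv]
        rw [this]; ring
    rw [hD0]
    constructor
    · intro h
      have hcne : G.degree u₀ ≠ Δ := hu₀
      have hu₀s : u₀ ∈ s := by rw [hs]; exact mem_erase.mpr ⟨hu₀w, mem_univ u₀⟩
      have hall : ∀ v ∈ s, G.degree v = G.degree u₀ := fun v hv => h v hv u₀ hu₀s
      constructor
      · rw [Finset.card_eq_one]
        refine ⟨w, ?_⟩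
        ext v
        simp only [mem_filter, mem_univ, true_and, mem_singleton]
        constructor
        · intro hv
          by_contra hvw
          have : v ∈ s := by rw [hs]; exact mem_erase.mpr ⟨hvw, mem_univ v⟩
          rw [hall v this] at hv
          exact hcne hv
        · intro hv; rw [hv]; exact hdw
      · intro v hv
        have hvw : v ≠ w := fun h' => hv (h' ▸ hdw)
        have hvs : v ∈ s := by rw [hs]; exact mem_erase.mpr ⟨hvw, mem_univ v⟩
        -- 2m = Δ + (n-1) * deg u₀
        have hsum : (2:ℝ) * m = (Δ:ℝ) + ((n:ℝ) - 1) * (G.degree u₀ : ℝ) := by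
          have h1 : ∑ x : V, (G.degree x : ℝ)
              = (G.degree w : ℝ) + ∑ x ∈ s, (G.degree x : ℝ) := by
            rw [hs, ← Finset.add_sum_erase _ _ hws]
          have h2 : ∑ x ∈ s, (G.degree x : ℝ) = ((n:ℝ) - 1) * (G.degree u₀ : ℝ) := by
            rw [Finset.sum_congr rfl (fun x hx => by rw [hall x hx]),
              Finset.sum_const, nsmul_eq_mul, hcards]
          rw [hsumdeg, hdw] at h1
          rw [h2] at h1
          linarith
        have : (G.degree v : ℝ) = (G.degree u₀ : ℝ) := by
          exact_mod_cast congrArg (Nat.cast : ℕ → ℝ) (hall v hvs)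
        rw [this]
        field_simp
        linarith
    · rintro ⟨hcard, hdeg⟩
      -- filter = {w}
      obtain ⟨x, hx⟩ := Finset.card_eq_one.mp hcard
      have hwx : w = x := by
        have : w ∈ univ.filter fun v => G.degree v = Δ := by
          simp [hdw]
        rw [hx] at this
        exact mem_singleton.mp this
      intro u hu v hv
      have hune : G.degree u ≠ Δ := by
        intro h'
        have : u ∈ univ.filter fun v => G.degree v = Δ := by simp [h']
        rw [hx, ← hwx] at this
        exact (mem_erase.mp (hs ▸ hu)).1 (mem_singleton.mp this)
      have hvne : G.degree v ≠ Δ := by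
        intro h'
        have : v ∈ univ.filter fun v => G.degree v = Δ := by simp [h']
        rw [hx, ← hwx] at this
        exact (mem_erase.mp (hs ▸ hv)).1 (mem_singleton.mp this)
      have : (G.degree u : ℝ) = (G.degree v : ℝ) := by
        rw [hdeg u hune, hdeg v hvne]
      exact_mod_cast this
end

section
/- For every tree T on n ≥ 2 vertices, σ_t(T) ≥ 2n - 4, with equality if and only if T is the path P_n. -/
/-!
Writing `d` for the degree sequence, `σ = n ∑ d² - (∑ d)²`, and in a tree `∑ d = 2n - 2`, so
`σ = n ∑ (d - 1)(d - 2) + 2n - 4`. Every summand is nonnegative on integers and vanishes exactly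
at `d ∈ {1, 2}`. As a nontrivial tree has no isolated vertex, equality means maximum degree at
most 2. A connected graph of maximum degree at most 2 with a leaf `v₀` is the path ordered by the
distance from `v₀`: each distance level is a single vertex, since the leaf, or a vertex of degree
at most 2 that has a neighbour closer to `v₀`, has room for only one neighbour farther away.
-/

open Finset

theorem Finset.sum_sum_sub_sq {ι R : Type*} [CommRing R] (s : Finset ι) (f : ι → R) :
    ∑ i ∈ s, ∑ j ∈ s, (f i - f j) ^ 2 = 2 * (#s * ∑ i ∈ s, f i ^ 2 - (∑ i ∈ s, f i) ^ 2) := by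
  simp only [sub_sq, sum_add_distrib, sum_sub_distrib, sum_const, nsmul_eq_mul, ← mul_sum,
    ← sum_mul]
  ring

section OrderedRing

variable {R : Type*} [CommRing R] [LinearOrder R] [IsStrictOrderedRing R]

lemma natCast_sub_one_mul_natCast_sub_two_nonneg (k : ℕ) : 0 ≤ ((k : R) - 1) * ((k : R) - 2) := by
  rcases k with _ | _ | k
  · norm_num
  · norm_num
  · push_cast
    ring_nf
    positivity

lemma natCast_sub_one_mul_natCast_sub_two_eq_zero {k : ℕ} :
    ((k : R) - 1) * ((k : R) - 2) = 0 ↔ k = 1 ∨ k = 2 := by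
  simp only [mul_eq_zero, sub_eq_zero]
  exact_mod_cast Iff.rfl

end OrderedRing

namespace SimpleGraph

variable {V : Type*} {G : SimpleGraph V}

lemma eq_of_adj_of_adj_of_degree_le_one {a u v : V} [Fintype (G.neighborSet a)]
    (ha : G.degree a ≤ 1) (hu : G.Adj a u) (hv : G.Adj a v) : u = v :=
  card_le_one.mp ha u ((mem_neighborFinset G a u).mpr hu) v ((mem_neighborFinset G a v).mpr hv)

lemma eq_of_adj_of_adj_of_degree_le_two {a u v w : V} [Fintype (G.neighborSet a)]
    (ha : G.degree a ≤ 2) (hu : G.Adj a u) (hv : G.Adj a v) (hw : G.Adj a w) (huw : u ≠ w)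
    (hvw : v ≠ w) : u = v := by
  by_contra huv
  have : 2 < #(G.neighborFinset a) := two_lt_card_iff.mpr
    ⟨u, v, w, by simpa using hu, by simpa using hv, by simpa using hw, huv, huw, hvw⟩
  rw [card_neighborFinset_eq_degree] at this
  omega

lemma exists_adj_dist_add_one_of_dist_ne_zero {u v : V} (h : G.dist u v ≠ 0) :
    ∃ w, G.Adj w v ∧ G.dist u w + 1 = G.dist u v := by
  obtain ⟨p, hp⟩ := exists_walk_of_dist_ne_zero (dist_comm (G := G) ▸ h)
  cases p with
  | nil => simp at h
  | cons hadj q =>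
    refine ⟨_, hadj.symm, ?_⟩
    have hq : G.dist u _ ≤ q.length := dist_comm (G := G) ▸ dist_le q
    rw [Walk.length_cons, dist_comm] at hp
    have := hadj.diff_dist_adj (u := u)
    omega

lemma adj_iff_dist_add_one_of_injective {v₀ u v : V} (hinj : Function.Injective (G.dist v₀)) :
    G.Adj u v ↔ G.dist v₀ u + 1 = G.dist v₀ v ∨ G.dist v₀ v + 1 = G.dist v₀ u := by
  have parent {x y : V} (h : G.dist v₀ x + 1 = G.dist v₀ y) : G.Adj x y := by
    obtain ⟨w, hw, hw'⟩ := exists_adj_dist_add_one_of_dist_ne_zero (show G.dist v₀ y ≠ 0 by omega)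
    exact hinj (by omega : G.dist v₀ w = G.dist v₀ x) ▸ hw
  refine ⟨fun h => ?_, fun h => h.elim parent fun h => (parent h).symm⟩
  have hne : G.dist v₀ u ≠ G.dist v₀ v := fun heq => h.ne (hinj heq)
  have := h.diff_dist_adj (u := v₀)
  omega

lemma Connected.injective_dist_of_degree_le_two [G.LocallyFinite] (hc : G.Connected) {v₀ : V}
    (h₀ : G.degree v₀ ≤ 1) (hdeg : ∀ v, G.degree v ≤ 2) :
    Function.Injective (G.dist v₀) := by
  suffices ∀ k u v, G.dist v₀ u = k → G.dist v₀ v = k → u = v from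
    fun u v h => this _ u v rfl h.symm
  intro k
  induction k with
  | zero => intro u v hu hv; rw [← hc.dist_eq_zero_iff.mp hu, ← hc.dist_eq_zero_iff.mp hv]
  | succ k ih =>
    intro u v hu hv
    obtain ⟨a, hau, ha⟩ := exists_adj_dist_add_one_of_dist_ne_zero (hu.trans_ne k.succ_ne_zero)
    obtain ⟨b, hbv, hb⟩ := exists_adj_dist_add_one_of_dist_ne_zero (hv.trans_ne k.succ_ne_zero)
    obtain rfl : a = b := ih a b (by omega) (by omega)
    rcases k with _ | k
    · obtain rfl : a = v₀ := (hc.dist_eq_zero_iff.mp (by omega)).symm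
      exact eq_of_adj_of_adj_of_degree_le_one h₀ hau hbv
    · obtain ⟨c, hca, hcd⟩ :=
        exists_adj_dist_add_one_of_dist_ne_zero (show G.dist v₀ a ≠ 0 by omega)
      refine eq_of_adj_of_adj_of_degree_le_two (hdeg a) hau hbv hca.symm ?_ ?_ <;>
        rintro rfl <;> omega

lemma dist_lt_card [Fintype V] (u v : V) : G.dist u v < Fintype.card V := by
  by_cases h : G.Reachable u v
  · obtain ⟨p, hp, hlen⟩ := h.exists_path_of_dist
    exact hlen ▸ hp.length_lt
  · rw [dist_eq_zero_of_not_reachable h]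
    exact Fintype.card_pos_iff.mpr ⟨u⟩

lemma degree_pathGraph_le_two {n : ℕ} (i : Fin n) [Fintype ((pathGraph n).neighborSet i)] :
    (pathGraph n).degree i ≤ 2 := by
  classical
  rw [← card_neighborFinset_eq_degree]
  calc #((pathGraph n).neighborFinset i) ≤ #({i.val - 1, i.val + 1} : Finset ℕ) :=
        card_le_card_of_injOn Fin.val (fun j hj => by simp [pathGraph_adj] at hj ⊢; omega)
          Fin.val_injective.injOn
    _ ≤ 2 := card_le_two

variable [Fintype V] [DecidableRel G.Adj]

theorem Connected.nonempty_iso_pathGraph_of_degree_le_two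
    (hc : G.Connected) {v₀ : V} (h₀ : G.degree v₀ ≤ 1) (hdeg : ∀ v, G.degree v ≤ 2) :
    Nonempty (G ≃g pathGraph (Fintype.card V)) := by
  have hinj := hc.injective_dist_of_degree_le_two h₀ hdeg
  let f : V → Fin (Fintype.card V) := fun v => ⟨G.dist v₀ v, dist_lt_card v₀ v⟩
  have hf : Function.Bijective f := (Fintype.bijective_iff_injective_and_card f).mpr
    ⟨fun u v h => hinj (congrArg Fin.val h), Fintype.card_fin _ |>.symm⟩
  exact ⟨⟨Equiv.ofBijective f hf, by
    simp [f, pathGraph_adj, adj_iff_dist_add_one_of_injective hinj]⟩⟩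

theorem IsTree.nonempty_iso_pathGraph_iff [Nontrivial V] (h : G.IsTree) :
    Nonempty (G ≃g pathGraph (Fintype.card V)) ↔ ∀ v, G.degree v ≤ 2 := by
  classical
  refine ⟨fun ⟨φ⟩ v => φ.degree_eq v ▸ degree_pathGraph_le_two (φ v), fun hdeg => ?_⟩
  obtain ⟨v₀, h₀⟩ := h.exists_vert_degree_one_of_nontrivial
  exact h.connected.nonempty_iso_pathGraph_of_degree_le_two h₀.le hdeg

lemma IsTree.sum_degree_eq (h : G.IsTree) :
    ∑ v, (G.degree v : ℝ) = 2 * Fintype.card V - 2 := by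
  have hsum := G.sum_degrees_eq_twice_card_edges
  have hedges := h.card_edgeFinset
  rw [← Nat.cast_sum, hsum, ← hedges]
  push_cast
  ring

lemma IsTree.sigmaT_eq (h : G.IsTree) :
    sigmaT G = Fintype.card V * ∑ v, ((G.degree v : ℝ) - 1) * ((G.degree v : ℝ) - 2)
      + (2 * Fintype.card V - 4) := by
  have hexpand : ∑ v, ((G.degree v : ℝ) - 1) * ((G.degree v : ℝ) - 2)
      = ∑ v, (G.degree v : ℝ) ^ 2 - 3 * ∑ v, (G.degree v : ℝ) + 2 * Fintype.card V := by
    have hconst : (2 * Fintype.card V : ℝ) = ∑ _v : V, 2 := by simp [mul_comm]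
    rw [hconst, mul_sum, ← sum_sub_distrib, ← sum_add_distrib]
    exact sum_congr rfl fun v _ => by ring
  rw [sigmaT, sum_sum_sub_sq, card_univ, hexpand, h.sum_degree_eq]
  ring

end SimpleGraph

open SimpleGraph in
theorem stmt16 {V : Type*} [Fintype V] (T : SimpleGraph V) [DecidableRel T.Adj]
    (htree : T.IsTree) (n : ℕ) (hn : n = Fintype.card V) (hn2 : 2 ≤ n) :
    sigmaT T ≥ 2 * (n : ℝ) - 4 ∧
      (sigmaT T = 2 * (n : ℝ) - 4 ↔ Nonempty (T ≃g SimpleGraph.pathGraph n)) := by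
  subst hn
  have : Nontrivial V := Fintype.one_lt_card_iff_nontrivial.mp hn2
  have hcard : (0 : ℝ) < Fintype.card V := by exact_mod_cast Fintype.card_pos
  have hterm (v : V) := natCast_sub_one_mul_natCast_sub_two_nonneg (R := ℝ) (T.degree v)
  rw [htree.sigmaT_eq]
  refine ⟨le_add_of_nonneg_left (mul_nonneg hcard.le (sum_nonneg fun v _ => hterm v)), ?_⟩
  calc _ ↔ ∑ v, ((T.degree v : ℝ) - 1) * ((T.degree v : ℝ) - 2) = 0 := by
        simp [hcard.ne']
    _ ↔ ∀ v, T.degree v = 1 ∨ T.degree v = 2 := by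
        simp only [sum_eq_zero_iff_of_nonneg fun v _ => hterm v, mem_univ, true_implies,
          natCast_sub_one_mul_natCast_sub_two_eq_zero]
    _ ↔ ∀ v, T.degree v ≤ 2 := forall_congr' fun v => by
        have := htree.connected.preconnected.degree_pos_of_nontrivial v
        omega
    _ ↔ _ := htree.nonempty_iso_pathGraph_iff.symm
end

section
/- Let G be a simple graph on n vertices that is not regular. Then σ_t(G) ≥ n - 1 if n is odd, and σ_t(G) ≥ 2n - 4 if n is even. -/
open Finset

/-!
Write `S(f) = ∑_u ∑_v (f u - f v)²` for an integer-valued `f`, so that `σ_t(G) = S(deg) / 2`.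
If `f` has two values at distance at least `2`, then every vertex `w` contributes at least `2`
from its pairs with them, and the two vertices themselves contribute at least `2n`, so
`S(f) ≥ 4n - 4`. Otherwise a nonconstant `f` takes exactly the values `c` and `c + 1`, say the
latter `k` times with `0 < k < n`, and then `S(f) = 2k(n - k) ≥ 2(n - 1)`. For `f = deg` the
handshake lemma gives `∑ f = nc + k` even, so for even `n` also `k` is even, hence `2 ≤ k ≤ n - 2`
and `S(f) ≥ 4(n - 2)`.
-/

section

variable {V : Type*} [Fintype V]

def sumSqDiff (f : V → ℤ) : ℤ :=
  ∑ u, ∑ v, (f u - f v) ^ 2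

lemma two_le_sq_add_sq_of_add_two_le {a b x : ℤ} (hab : a + 2 ≤ b) :
    2 ≤ (a - x) ^ 2 + (b - x) ^ 2 := by
  nlinarith [sq_nonneg (a + b - 2 * x)]

lemma four_mul_card_sub_four_le_sumSqDiff (f : V → ℤ) {u₀ v₀ : V} (hgap : f u₀ + 2 ≤ f v₀) :
    4 * (Fintype.card V : ℤ) - 4 ≤ sumSqDiff f := by
  classical
  have hne : u₀ ≠ v₀ := by rintro rfl; omega
  set row : V → ℤ := fun u ↦ ∑ v, (f u - f v) ^ 2
  have hrow : ∀ w, 2 ≤ row w := fun w ↦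
    calc 2 ≤ (f w - f u₀) ^ 2 + (f w - f v₀) ^ 2 := by
          rw [sub_sq_comm, sub_sq_comm (f w)]; exact two_le_sq_add_sq_of_add_two_le hgap
      _ = ∑ v ∈ {u₀, v₀}, (f w - f v) ^ 2 := (sum_pair (f := fun v ↦ (f w - f v) ^ 2) hne).symm
      _ ≤ row w := sum_le_sum_of_subset_of_nonneg (subset_univ _) fun _ _ _ ↦ sq_nonneg _
  have hpair : 2 * (Fintype.card V : ℤ) ≤ ∑ u ∈ {u₀, v₀}, row u := by
    rw [sum_pair hne, ← sum_add_distrib]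
    calc 2 * (Fintype.card V : ℤ) = ∑ _ : V, 2 := by simp [mul_comm]
      _ ≤ _ := sum_le_sum fun w _ ↦ two_le_sq_add_sq_of_add_two_le hgap
  have hrest : 2 * ((Fintype.card V : ℤ) - 2) ≤ ∑ u ∈ univ \ {u₀, v₀}, row u := by
    calc 2 * ((Fintype.card V : ℤ) - 2) = ∑ _ ∈ univ \ {u₀, v₀}, (2 : ℤ) := by
          rw [sum_const, card_sdiff_of_subset (subset_univ _), card_pair hne, card_univ,
            nsmul_eq_mul, Nat.cast_sub (Fintype.one_lt_card_iff.mpr ⟨u₀, v₀, hne⟩)]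
          push_cast; ring
      _ ≤ _ := sum_le_sum fun w _ ↦ hrow w
  have hsplit := sum_sdiff (f := row) (subset_univ ({u₀, v₀} : Finset V))
  simp only [sumSqDiff]
  linarith

lemma sumSqDiff_eq_of_forall_eq_or_eq_add_one (f : V → ℤ) {c : ℤ}
    (hf : ∀ v, f v = c ∨ f v = c + 1) :
    sumSqDiff f = 2 * (∑ v, (f v - c)) * (Fintype.card V - ∑ v, (f v - c)) := by
  have hidem : ∀ v, (f v - c) ^ 2 = f v - c := fun v ↦ by rcases hf v with h | h <;> rw [h] <;> ring
  calc sumSqDiff f = ∑ u, ∑ v, ((f u - c) + (f v - c) - 2 * ((f u - c) * (f v - c))) := by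
        refine sum_congr rfl fun u _ ↦ sum_congr rfl fun v _ ↦ ?_
        linear_combination hidem u + hidem v
    _ = _ := by
        simp only [sum_sub_distrib, sum_add_distrib, ← mul_sum, ← sum_mul, sum_const, card_univ,
          nsmul_eq_mul]
        ring

lemma four_mul_card_sub_four_le_or_exists_sumSqDiff_eq (f : V → ℤ) (hf : ∃ u v, f u ≠ f v) :
    4 * (Fintype.card V : ℤ) - 4 ≤ sumSqDiff f ∨
      ∃ c k : ℤ, 0 < k ∧ k < Fintype.card V ∧ ∑ v, f v = Fintype.card V * c + k ∧
        sumSqDiff f = 2 * k * (Fintype.card V - k) := by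
  obtain ⟨u₁, v₁, hne⟩ := hf
  obtain ⟨u₀, -, hmin⟩ := exists_min_image univ f ⟨u₁, mem_univ _⟩
  by_cases hgap : ∃ v, f u₀ + 2 ≤ f v
  · obtain ⟨v, hv⟩ := hgap
    exact .inl (four_mul_card_sub_four_le_sumSqDiff f hv)
  push Not at hgap
  set c := f u₀
  have hf : ∀ v, f v = c ∨ f v = c + 1 := fun v ↦ by
    have := hmin v (mem_univ v); have := hgap v; omega
  obtain ⟨u, hu⟩ : ∃ u, f u = c := ⟨u₀, rfl⟩
  obtain ⟨v, hv⟩ : ∃ v, f v = c + 1 := by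
    rcases hf u₁ with h₁ | h₁ <;> rcases hf v₁ with h₂ | h₂
    exacts [absurd (h₁.trans h₂.symm) hne, ⟨v₁, h₂⟩, ⟨u₁, h₁⟩, ⟨u₁, h₁⟩]
  refine .inr ⟨c, ∑ w, (f w - c), ?_, ?_, ?_, sumSqDiff_eq_of_forall_eq_or_eq_add_one f hf⟩
  · calc 0 < f v - c := by omega
      _ ≤ ∑ w, (f w - c) :=
        single_le_sum (f := fun w ↦ f w - c)
          (fun w _ ↦ by rcases hf w with h | h <;> omega) (mem_univ v)
  · have : 1 ≤ ∑ w, (c + 1 - f w) :=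
      calc 1 = c + 1 - f u := by omega
        _ ≤ ∑ w, (c + 1 - f w) :=
          single_le_sum (f := fun w ↦ c + 1 - f w)
            (fun w _ ↦ by rcases hf w with h | h <;> omega) (mem_univ u)
    simp only [sum_sub_distrib, sum_const, card_univ, nsmul_eq_mul] at this ⊢
    linarith
  · simp only [sum_sub_distrib, sum_const, card_univ, nsmul_eq_mul]
    ring

lemma two_mul_card_sub_one_le_sumSqDiff (f : V → ℤ) (hf : ∃ u v, f u ≠ f v) :
    2 * ((Fintype.card V : ℤ) - 1) ≤ sumSqDiff f := by
  have hcard : 1 ≤ (Fintype.card V : ℤ) := by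
    obtain ⟨u, -⟩ := hf
    exact_mod_cast Fintype.card_pos_iff.mpr ⟨u⟩
  rcases four_mul_card_sub_four_le_or_exists_sumSqDiff_eq f hf with h | ⟨c, k, hk, hkn, -, hS⟩
  · linarith
  · nlinarith

lemma four_mul_card_sub_two_le_sumSqDiff (f : V → ℤ) (hf : ∃ u v, f u ≠ f v)
    (hn : Even (Fintype.card V)) (hsum : Even (∑ v, f v)) :
    4 * ((Fintype.card V : ℤ) - 2) ≤ sumSqDiff f := by
  rcases four_mul_card_sub_four_le_or_exists_sumSqDiff_eq f hf with h | ⟨c, k, hk, hkn, hfk, hS⟩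
  · linarith
  have hn' : Even (Fintype.card V : ℤ) := hn.natCast
  have hkeven : Even k := by
    rw [hfk, Int.even_add] at hsum
    exact hsum.mp (hn'.mul_right c)
  have h2k : 2 ≤ k := by obtain ⟨a, ha⟩ := hkeven; omega
  have h2nk : 2 ≤ (Fintype.card V : ℤ) - k := by
    obtain ⟨a, ha⟩ := hkeven; obtain ⟨m, hm⟩ := hn'; omega
  rw [hS]
  nlinarith [mul_nonneg (sub_nonneg.2 h2k) (sub_nonneg.2 h2nk)]

end

lemma SimpleGraph.exists_degree_ne_of_not_isRegular {V : Type*} [Fintype V] {G : SimpleGraph V}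
    [DecidableRel G.Adj] (h : ¬ ∃ d : ℕ, G.IsRegularOfDegree d) :
    ∃ u v, G.degree u ≠ G.degree v := by
  by_contra! hall
  cases isEmpty_or_nonempty V with
  | inl _ => exact h ⟨0, .of_isEmpty⟩
  | inr hV => exact h ⟨G.degree hV.some, fun v ↦ hall v hV.some⟩

lemma sigmaT_eq_sumSqDiff_div_two {V : Type*} [Fintype V] (G : SimpleGraph V)
    [DecidableRel G.Adj] : sigmaT G = (sumSqDiff fun v ↦ (G.degree v : ℤ) : ℝ) / 2 := by
  simp [sigmaT, sumSqDiff]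

theorem stmt17 {V : Type*} [Fintype V] (G : SimpleGraph V) [DecidableRel G.Adj]
    (hirreg : ¬ ∃ d : ℕ, G.IsRegularOfDegree d) (n : ℕ) (hn : n = Fintype.card V) :
    (Odd n → sigmaT G ≥ (n : ℝ) - 1) ∧ (Even n → sigmaT G ≥ 2 * (n : ℝ) - 4) := by
  subst hn
  have hne : ∃ u v, (G.degree u : ℤ) ≠ G.degree v := by
    simpa using G.exists_degree_ne_of_not_isRegular hirreg
  have hsum : Even (∑ v, (G.degree v : ℤ)) := by
    rw [← Nat.cast_sum, G.sum_degrees_eq_twice_card_edges]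
    exact (even_two_mul _).natCast
  rw [sigmaT_eq_sumSqDiff_div_two]
  refine ⟨fun _ ↦ ?_, fun heven ↦ ?_⟩
  · have h := two_mul_card_sub_one_le_sumSqDiff _ hne
    have h' := (Int.cast_le (R := ℝ)).mpr h
    push_cast at h'
    linarith
  · have h := four_mul_card_sub_two_le_sumSqDiff _ hne heven hsum
    have h' := (Int.cast_le (R := ℝ)).mpr h
    push_cast at h'
    linarith
end

section
/- Let G be a connected simple graph on n vertices with largest Laplacian eigenvalue μ_n. Then σ(G) ≤ (μ_n/n)·σ_t(G), where σ(G) = Σ_{uv∈E(G)} (d(u) - d(v))². -/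
/-!
Write `d` for the degree vector, `d̄` for its mean and `L` for the Laplacian. The form
`σ(G) = dᵀ L d` is unchanged when `d̄` is subtracted from `d`, `σ_t(G) = n ‖d - d̄‖²`, and
`L ≼ μₙ I`, so `n σ(G) = n (d - d̄)ᵀ L (d - d̄) ≤ μₙ n ‖d - d̄‖² = μₙ σ_t(G)`.
-/

open Finset
open scoped Matrix

noncomputable def sigmaE {V : Type*} [Fintype V] (G : SimpleGraph V) [DecidableRel G.Adj] : ℝ :=
  (∑ u : V, ∑ v : V, if G.Adj u v then ((G.degree u : ℝ) - (G.degree v : ℝ)) ^ 2 else 0) / 2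

namespace Matrix

variable {n : Type*} [Fintype n] [DecidableEq n]

open scoped MatrixOrder ComplexOrder in
theorem IsHermitian.posSemidef_smul_one_sub_of_eigenvalues_le {𝕜 : Type*} [RCLike 𝕜]
    {A : Matrix n n 𝕜} (hA : A.IsHermitian) {μ : ℝ} (hμ : ∀ i, hA.eigenvalues i ≤ μ) :
    (μ • (1 : Matrix n n 𝕜) - A).PosSemidef := by
  have h : A ≤ algebraMap ℝ (Matrix n n 𝕜) μ := by
    refine le_algebraMap_of_spectrum_le fun r hr => ?_
    obtain ⟨i, rfl⟩ := hA.spectrum_real_eq_range_eigenvalues ▸ hr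
    exact hμ i
  rwa [Algebra.algebraMap_eq_smul_one] at h

theorem IsHermitian.dotProduct_mulVec_le_of_eigenvalues_le {A : Matrix n n ℝ}
    (hA : A.IsHermitian) {μ : ℝ} (hμ : ∀ i, hA.eigenvalues i ≤ μ) (x : n → ℝ) :
    x ⬝ᵥ A *ᵥ x ≤ μ * (x ⬝ᵥ x) := by
  have h := (hA.posSemidef_smul_one_sub_of_eigenvalues_le hμ).dotProduct_mulVec_nonneg x
  rwa [star_trivial, sub_mulVec, dotProduct_sub, smul_mulVec, one_mulVec, dotProduct_smul,
    smul_eq_mul, sub_nonneg] at h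

end Matrix

theorem sum_sum_sub_sq_eq_two_mul_card_mul_sum_sub_mean_sq {V : Type*} [Fintype V]
    (x : V → ℝ) :
    ∑ u, ∑ v, (x u - x v) ^ 2 =
      2 * Fintype.card V * ∑ v, (x v - (∑ w, x w) / Fintype.card V) ^ 2 := by
  rcases isEmpty_or_nonempty V with hV | hV
  · simp
  have hcard : (Fintype.card V : ℝ) ≠ 0 := by positivity
  have hpair : ∀ u v, (x u - x v) ^ 2 = x u ^ 2 + x v ^ 2 - 2 * (x u * x v) := fun u v => by ring
  have hmean : ∀ v, (x v - (∑ w, x w) / Fintype.card V) ^ 2 =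
      x v ^ 2 - 2 * ((∑ w, x w) / Fintype.card V) * x v + ((∑ w, x w) / Fintype.card V) ^ 2 :=
    fun v => by ring
  simp only [hpair, hmean, sum_sub_distrib, sum_add_distrib, sum_const, card_univ, nsmul_eq_mul,
    ← mul_sum, ← sum_mul]
  field_simp
  ring

namespace SimpleGraph

variable {V : Type*} [Fintype V] [DecidableEq V] (G : SimpleGraph V) [DecidableRel G.Adj]

theorem dotProduct_lapMatrix_mulVec (x : V → ℝ) :
    x ⬝ᵥ G.lapMatrix ℝ *ᵥ x = (∑ u, ∑ v, if G.Adj u v then (x u - x v) ^ 2 else 0) / 2 := by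
  rw [← Matrix.toLinearMap₂'_apply', lapMatrix_toLinearMap₂']

theorem dotProduct_lapMatrix_mulVec_sub_const (x : V → ℝ) (c : ℝ) :
    (fun v => x v - c) ⬝ᵥ G.lapMatrix ℝ *ᵥ (fun v => x v - c) = x ⬝ᵥ G.lapMatrix ℝ *ᵥ x := by
  simp only [dotProduct_lapMatrix_mulVec, sub_sub_sub_cancel_right]

theorem card_mul_dotProduct_lapMatrix_mulVec_le (hL : (G.lapMatrix ℝ).IsHermitian) {μ : ℝ}
    (hμ : ∀ i, hL.eigenvalues i ≤ μ) (x : V → ℝ) :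
    Fintype.card V * (x ⬝ᵥ G.lapMatrix ℝ *ᵥ x) ≤ μ * ((∑ u, ∑ v, (x u - x v) ^ 2) / 2) := by
  set y : V → ℝ := fun v => x v - (∑ w, x w) / Fintype.card V
  have hy : y ⬝ᵥ y = ∑ v, y v ^ 2 := by simp only [dotProduct, sq]
  calc Fintype.card V * (x ⬝ᵥ G.lapMatrix ℝ *ᵥ x)
      = Fintype.card V * (y ⬝ᵥ G.lapMatrix ℝ *ᵥ y) := by
        rw [G.dotProduct_lapMatrix_mulVec_sub_const]
    _ ≤ Fintype.card V * (μ * (y ⬝ᵥ y)) := by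
        gcongr
        exact hL.dotProduct_mulVec_le_of_eigenvalues_le hμ y
    _ = μ * ((∑ u, ∑ v, (x u - x v) ^ 2) / 2) := by
        rw [sum_sum_sub_sq_eq_two_mul_card_mul_sum_sub_mean_sq, hy]
        ring

theorem sigmaE_eq_dotProduct_lapMatrix_mulVec :
    sigmaE G = (fun v => (G.degree v : ℝ)) ⬝ᵥ G.lapMatrix ℝ *ᵥ (fun v => (G.degree v : ℝ)) :=
  (G.dotProduct_lapMatrix_mulVec _).symm

end SimpleGraph

theorem stmt18_general {V : Type*} [Fintype V] [DecidableEq V] (G : SimpleGraph V)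
    [DecidableRel G.Adj] (n : ℕ) (hn : n = Fintype.card V)
    (hL : (G.lapMatrix ℝ).IsHermitian) (μn : ℝ)
    (hmax : ∀ i, hL.eigenvalues i ≤ μn) :
    sigmaE G ≤ μn / n * sigmaT G := by
  have key : n * sigmaE G ≤ μn * sigmaT G := by
    rw [hn, G.sigmaE_eq_dotProduct_lapMatrix_mulVec]
    exact G.card_mul_dotProduct_lapMatrix_mulVec_le hL hmax _
  rcases n.eq_zero_or_pos with rfl | hpos
  · have : IsEmpty V := Fintype.card_eq_zero_iff.mp hn.symm
    simp [sigmaE]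
  · rw [div_mul_eq_mul_div, le_div_iff₀ (by exact_mod_cast hpos)]
    linarith

theorem stmt18 {V : Type*} [Fintype V] [DecidableEq V] (G : SimpleGraph V)
    [DecidableRel G.Adj] (hconn : G.Connected) (n : ℕ) (hn : n = Fintype.card V)
    (hL : (G.lapMatrix ℝ).IsHermitian) (μn : ℝ)
    (hmax : ∀ i, hL.eigenvalues i ≤ μn) (hmem : ∃ i, hL.eigenvalues i = μn) :
    sigmaE G ≤ μn / n * sigmaT G :=
  stmt18_general G n hn hL μn hmax
end
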